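/- In the stage game Γ(μ) with unbounded signals (α⁻ = 0 and α⁺ = 1), for every prior μ ∈ (0,1) there exists no deterrence equilibrium: in every subgame perfect equilibrium of Γ(μ), each firm is chosen by the consumer with positive probability. -/

import Mathlib

open MeasureTheory Set Filter Topology
open scoped ENNReal NNReal

noncomputable section

/-- The consumer's possible actions: buy product 0, buy product 1, or exit. -/
inductive CAction : Type
  | buy0 : CAction
  | buy1 : CAction
  | exit : CAction

instance : MeasurableSpace CAction := ⊤

/-- A signal structure `(F₀, F₁, S)`: two mutually absolutely continuous
probability measures on a measurable space `S`. -/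
structure SignalStructure (S : Type) [MeasurableSpace S] : Type where
  F0 : Measure S
  F1 : Measure S
  prob0 : IsProbabilityMeasure F0
  prob1 : IsProbabilityMeasure F1
  ac01 : F0 ≪ F1
  ac10 : F1 ≪ F0

namespace SignalStructure

variable {S : Type} [MeasurableSpace S]

/-- The reference measure `(F₀ + F₁)/2`. -/
def ref (𝒮 : SignalStructure S) : Measure S := (2 : ℝ≥0∞)⁻¹ • (𝒮.F0 + 𝒮.F1)

/-- Radon–Nikodym density of `F₀` with respect to `(F₀+F₁)/2`. -/
def f0 (𝒮 : SignalStructure S) : S → ℝ≥0∞ := 𝒮.F0.rnDeriv 𝒮.ref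

/-- Radon–Nikodym density of `F₁` with respect to `(F₀+F₁)/2`. -/
def f1 (𝒮 : SignalStructure S) : S → ℝ≥0∞ := 𝒮.F1.rnDeriv 𝒮.ref

/-- The private belief `p(s) = f₀(s)/(f₀(s)+f₁(s))`. -/
def p (𝒮 : SignalStructure S) (s : S) : ℝ :=
  (𝒮.f0 s).toReal / ((𝒮.f0 s).toReal + (𝒮.f1 s).toReal)

/-- `G₀(x) = F₀ {s | p(s) < x}`, the CDF of the private belief in state 0. -/
def G0 (𝒮 : SignalStructure S) (x : ℝ) : ℝ := (𝒮.F0 {s | 𝒮.p s < x}).toReal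

/-- `G₁(x) = F₁ {s | p(s) < x}`, the CDF of the private belief in state 1. -/
def G1 (𝒮 : SignalStructure S) (x : ℝ) : ℝ := (𝒮.F1 {s | 𝒮.p s < x}).toReal

/-- `α⁻ = inf {x | G(x) > 0}`. -/
def alphaLo (𝒮 : SignalStructure S) : ℝ := sInf {x | 0 < 𝒮.G0 x}

/-- `α⁺ = sup {x | G(x) < 1}`. -/
def alphaHi (𝒮 : SignalStructure S) : ℝ := sSup {x | 𝒮.G0 x < 1}

/-- Signals are bounded if `α⁻ > 0` and `α⁺ < 1`. -/
def Bounded (𝒮 : SignalStructure S) : Prop := 0 < 𝒮.alphaLo ∧ 𝒮.alphaHi < 1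

/-- Signals are unbounded if `α⁻ = 0` and `α⁺ = 1`. -/
def Unbounded (𝒮 : SignalStructure S) : Prop := 𝒮.alphaLo = 0 ∧ 𝒮.alphaHi = 1

/-- Assumption 1: `G₀, G₁` are differentiable on `(α⁻, α⁺)` with continuous
nonnegative derivatives `g₀, g₁ : [α⁻, α⁺] → ℝ₊`. -/
structure Assumption1 (𝒮 : SignalStructure S) (g0 g1 : ℝ → ℝ) : Prop where
  cont0 : ContinuousOn g0 (Icc 𝒮.alphaLo 𝒮.alphaHi)
  cont1 : ContinuousOn g1 (Icc 𝒮.alphaLo 𝒮.alphaHi)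
  nonneg0 : ∀ x ∈ Icc 𝒮.alphaLo 𝒮.alphaHi, 0 ≤ g0 x
  nonneg1 : ∀ x ∈ Icc 𝒮.alphaLo 𝒮.alphaHi, 0 ≤ g1 x
  hasDeriv0 : ∀ x ∈ Ioo 𝒮.alphaLo 𝒮.alphaHi, HasDerivAt 𝒮.G0 (g0 x) x
  hasDeriv1 : ∀ x ∈ Ioo 𝒮.alphaLo 𝒮.alphaHi, HasDerivAt 𝒮.G1 (g1 x) x

/-- The signal structure exhibits vanishing likelihood: `g₁(α⁻) = g₀(α⁺) = 0`. -/
def VanishingLikelihood (𝒮 : SignalStructure S) (g0 g1 : ℝ → ℝ) : Prop :=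
  g1 𝒮.alphaLo = 0 ∧ g0 𝒮.alphaHi = 0

end SignalStructure

/-- Bayesian posterior on state 0 from a prior `μ` and a private belief `q`:
`p_μ = μ q / (μ q + (1-μ)(1-q))`. -/
def posterior (μ q : ℝ) : ℝ := μ * q / (μ * q + (1 - μ) * (1 - q))

/-- The consumer's expected utility, given posterior `q` on state 0 and prices
`τ₀, τ₁`, from each action. -/
def cUtil (q τ0 τ1 : ℝ) : CAction → ℝ
  | CAction.buy0 => q - τ0
  | CAction.buy1 => (1 - q) - τ1
  | CAction.exit => 0

/-- A consumer pure strategy: maps the posted price pair and the signal to an action. -/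
abbrev CStrategy (S : Type) : Type := ℝ → ℝ → S → CAction

/-- A mixed price strategy of a firm: a Borel probability measure on `[0,1]`. -/
def IsPriceStrategy (φ : Measure ℝ) : Prop :=
  IsProbabilityMeasure φ ∧ φ (Icc (0:ℝ) 1) = 1

namespace SignalStructure

variable {S : Type} [MeasurableSpace S]

/-- The signal distribution under prior `μ`: the mixture `μ F₀ + (1-μ) F₁`. -/
def Fmix (𝒮 : SignalStructure S) (μ : ℝ) : Measure S :=
  ENNReal.ofReal μ • 𝒮.F0 + ENNReal.ofReal (1 - μ) • 𝒮.F1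

/-- The probability (under prior `μ`) that the consumer takes action `a` when the
pure prices `τ₀, τ₁` are posted. -/
def actProb (𝒮 : SignalStructure S) (μ : ℝ) (σ : CStrategy S) (τ0 τ1 : ℝ) (a : CAction) : ℝ :=
  (𝒮.Fmix μ {s | σ τ0 τ1 s = a}).toReal

/-- Firm 0's expected payoff in `Γ(μ)` under mixed strategies `φ₀, φ₁` and consumer
strategy `σ`. -/
def Pi0 (𝒮 : SignalStructure S) (μ : ℝ) (φ0 φ1 : Measure ℝ) (σ : CStrategy S) : ℝ :=
  ∫ τ, 𝒮.actProb μ σ τ.1 τ.2 CAction.buy0 * τ.1 ∂(φ0.prod φ1)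

/-- Firm 1's expected payoff in `Γ(μ)`. -/
def Pi1 (𝒮 : SignalStructure S) (μ : ℝ) (φ0 φ1 : Measure ℝ) (σ : CStrategy S) : ℝ :=
  ∫ τ, 𝒮.actProb μ σ τ.1 τ.2 CAction.buy1 * τ.2 ∂(φ0.prod φ1)

/-- The probability that the consumer takes action `a` under mixed price strategies. -/
def actProbMix (𝒮 : SignalStructure S) (μ : ℝ) (φ0 φ1 : Measure ℝ) (σ : CStrategy S)
    (a : CAction) : ℝ :=
  ∫ τ, 𝒮.actProb μ σ τ.1 τ.2 a ∂(φ0.prod φ1)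

/-- A subgame perfect equilibrium of the stage game `Γ(μ)`: the consumer strategy is a
best reply to every price pair, and each firm's mixed price strategy maximizes its
expected payoff given the opponent's strategy and the consumer's strategy. -/
structure IsSPE (𝒮 : SignalStructure S) (μ : ℝ) (φ0 φ1 : Measure ℝ) (σ : CStrategy S) :
    Prop where
  strat0 : IsPriceStrategy φ0
  strat1 : IsPriceStrategy φ1
  meas : ∀ τ0 τ1, Measurable (σ τ0 τ1)
  consumerBR : ∀ τ0 ∈ Icc (0:ℝ) 1, ∀ τ1 ∈ Icc (0:ℝ) 1,
    ∀ᵐ s ∂(𝒮.Fmix μ), ∀ a : CAction,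
      cUtil (posterior μ (𝒮.p s)) τ0 τ1 a ≤ cUtil (posterior μ (𝒮.p s)) τ0 τ1 (σ τ0 τ1 s)
  firm0opt : ∀ ψ : Measure ℝ, IsPriceStrategy ψ → 𝒮.Pi0 μ ψ φ1 σ ≤ 𝒮.Pi0 μ φ0 φ1 σ
  firm1opt : ∀ ψ : Measure ℝ, IsPriceStrategy ψ → 𝒮.Pi1 μ φ0 ψ σ ≤ 𝒮.Pi1 μ φ0 φ1 σ

/-- A deterrence equilibrium: an SPE in which some firm sells with probability zero. -/
def IsDeterrence (𝒮 : SignalStructure S) (μ : ℝ) (φ0 φ1 : Measure ℝ) (σ : CStrategy S) :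
    Prop :=
  𝒮.IsSPE μ φ0 φ1 σ ∧
    (𝒮.actProbMix μ φ0 φ1 σ CAction.buy0 = 0 ∨ 𝒮.actProbMix μ φ0 φ1 σ CAction.buy1 = 0)

/-- The market is full at `(μ, σ, τ₀, τ₁)` if the consumer exits with probability zero. -/
def MarketFull (𝒮 : SignalStructure S) (μ : ℝ) (σ : CStrategy S) (τ0 τ1 : ℝ) : Prop :=
  𝒮.Fmix μ {s | σ τ0 τ1 s = CAction.exit} = 0

open scoped Classical in
/-- The consumer's best-reply threshold `v_μ(τ₀,τ₁)` on the private belief. -/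
def v (𝒮 : SignalStructure S) (μ : ℝ) (σ : CStrategy S) (τ0 τ1 : ℝ) : ℝ :=
  if 𝒮.MarketFull μ σ τ0 τ1 then
    (1 - μ) * (1 + τ0 - τ1) / (2 * μ - (2 * μ - 1) * (1 + τ0 - τ1))
  else (1 - μ) * τ0 / (μ - (2 * μ - 1) * τ0)

end SignalStructure

/-!
If a firm sold with probability zero in an equilibrium, its profit would be zero. With unbounded
signals, however, the consumer's posterior exceeds `3/4` (and falls below `1/4`) with positive
probability, and a firm charging `1/2` wins every such consumer whatever its rival charges. So the
deviation to the price `1/2` is strictly profitable, a contradiction.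

Assumption 1 makes the private belief atomless, so the consumer is indifferent only on a null set.
Hence sale probabilities agree, at all prices in `[0,1]`, with monotone functions of a price
threshold on the posterior; this is what makes the payoff integrals meaningful.
-/

theorem mul_add_one_sub_mul_one_sub_pos {a b : ℝ} (ha : a ∈ Ioo (0:ℝ) 1) (hb : b ∈ Icc (0:ℝ) 1) :
    0 < a * b + (1 - a) * (1 - b) := by
  nlinarith [mul_pos ha.1 (sub_pos.2 ha.2), mul_nonneg (mul_nonneg ha.1.le hb.1) ha.1.le,
    mul_nonneg (mul_nonneg (sub_nonneg.2 ha.2.le) (sub_nonneg.2 hb.2)) (sub_nonneg.2 ha.2.le)]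

/-- The private belief at which the posterior under the prior `μ` equals `t`. -/
def beliefThreshold (μ t : ℝ) : ℝ := t * (1 - μ) / (t * (1 - μ) + μ * (1 - t))

section Posterior

variable {μ q t : ℝ}

theorem beliefThreshold_denom_pos (hμ : μ ∈ Ioo (0:ℝ) 1) (ht : t ∈ Icc (0:ℝ) 1) :
    0 < t * (1 - μ) + μ * (1 - t) := by
  have := mul_add_one_sub_mul_one_sub_pos (a := 1 - μ) ⟨by linarith [hμ.2], by linarith [hμ.1]⟩ ht
  linarith

theorem lt_posterior_iff (hμ : μ ∈ Ioo (0:ℝ) 1) (hq : q ∈ Icc (0:ℝ) 1) (ht : t ∈ Icc (0:ℝ) 1) :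
    t < posterior μ q ↔ beliefThreshold μ t < q := by
  rw [posterior, beliefThreshold, lt_div_iff₀ (mul_add_one_sub_mul_one_sub_pos hμ hq),
    div_lt_iff₀ (beliefThreshold_denom_pos hμ ht)]
  constructor <;> intro h <;> nlinarith

theorem posterior_lt_iff (hμ : μ ∈ Ioo (0:ℝ) 1) (hq : q ∈ Icc (0:ℝ) 1) (ht : t ∈ Icc (0:ℝ) 1) :
    posterior μ q < t ↔ q < beliefThreshold μ t := by
  rw [posterior, beliefThreshold, div_lt_iff₀ (mul_add_one_sub_mul_one_sub_pos hμ hq),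
    lt_div_iff₀ (beliefThreshold_denom_pos hμ ht)]
  constructor <;> intro h <;> nlinarith

theorem eq_beliefThreshold_of_posterior_eq (hμ : μ ∈ Ioo (0:ℝ) 1) (hq : q ∈ Icc (0:ℝ) 1)
    (ht : t ∈ Icc (0:ℝ) 1) (h : posterior μ q = t) : q = beliefThreshold μ t :=
  le_antisymm (not_lt.1 fun hlt => ((lt_posterior_iff hμ hq ht).2 hlt).ne' h)
    (not_lt.1 fun hlt => ((posterior_lt_iff hμ hq ht).2 hlt).ne h)

theorem beliefThreshold_mem_Ioo (hμ : μ ∈ Ioo (0:ℝ) 1) (ht : t ∈ Ioo (0:ℝ) 1) :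
    beliefThreshold μ t ∈ Ioo (0:ℝ) 1 := by
  have hE := beliefThreshold_denom_pos hμ (Ioo_subset_Icc_self ht)
  refine ⟨div_pos (mul_pos ht.1 (sub_pos.2 hμ.2)) hE, ?_⟩
  rw [beliefThreshold, div_lt_one hE]
  nlinarith [mul_pos hμ.1 (sub_pos.2 ht.2)]

end Posterior

/-- The consumer buys from firm 0 iff her posterior exceeds this threshold; the paper's
`v_μ(τ₀, τ₁)` is `beliefThreshold μ` of its binding term. -/
def buy0Threshold (τ0 τ1 : ℝ) : ℝ := max τ0 ((1 + τ0 - τ1) / 2)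

def buy1Threshold (τ0 τ1 : ℝ) : ℝ := min (1 - τ1) ((1 + τ0 - τ1) / 2)

section BestReply

variable {q τ0 τ1 : ℝ} {a : CAction}

theorem eq_buy0_iff_of_isBestReply (hbr : ∀ b, cUtil q τ0 τ1 b ≤ cUtil q τ0 τ1 a)
    (hq : q ≠ buy0Threshold τ0 τ1) : a = .buy0 ↔ buy0Threshold τ0 τ1 < q := by
  have h0 := hbr .buy0
  have h1 := hbr .buy1
  have he := hbr .exit
  rw [buy0Threshold] at hq ⊢
  cases a <;> simp only [cUtil, reduceCtorEq, false_iff, true_iff, max_lt_iff, not_and_or,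
    not_lt] at h0 h1 he ⊢
  · exact lt_of_le_of_ne (max_le (by linarith) (by linarith)) (Ne.symm hq) |> max_lt_iff.1
  · right; linarith
  · left; linarith

theorem eq_buy1_iff_of_isBestReply (hbr : ∀ b, cUtil q τ0 τ1 b ≤ cUtil q τ0 τ1 a)
    (hq : q ≠ buy1Threshold τ0 τ1) : a = .buy1 ↔ q < buy1Threshold τ0 τ1 := by
  have h0 := hbr .buy0
  have h1 := hbr .buy1
  have he := hbr .exit
  rw [buy1Threshold] at hq ⊢
  cases a <;> simp only [cUtil, reduceCtorEq, false_iff, true_iff, lt_min_iff, not_and_or,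
    not_lt] at h0 h1 he ⊢
  · right; linarith
  · exact lt_of_le_of_ne (le_min (by linarith) (by linarith)) hq |> lt_min_iff.1
  · left; linarith

end BestReply

theorem buy0Threshold_mem_Icc {τ0 τ1 : ℝ} (h0 : τ0 ∈ Icc (0:ℝ) 1) (h1 : τ1 ∈ Icc (0:ℝ) 1) :
    buy0Threshold τ0 τ1 ∈ Icc (0:ℝ) 1 :=
  ⟨le_max_of_le_left h0.1, max_le h0.2 (by linarith [h0.2, h1.1])⟩

theorem buy1Threshold_mem_Icc {τ0 τ1 : ℝ} (h0 : τ0 ∈ Icc (0:ℝ) 1) (h1 : τ1 ∈ Icc (0:ℝ) 1) :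
    buy1Threshold τ0 τ1 ∈ Icc (0:ℝ) 1 :=
  ⟨le_min (by linarith [h1.2]) (by linarith [h0.1, h1.2]), min_le_of_left_le (by linarith [h1.1])⟩

theorem IsPriceStrategy.ae_mem_Icc {φ : Measure ℝ} (h : IsPriceStrategy φ) :
    ∀ᵐ x ∂φ, x ∈ Icc (0:ℝ) 1 := by
  have := h.1
  exact (mem_ae_iff_prob_eq_one measurableSet_Icc).2 h.2

theorem isPriceStrategy_dirac {x : ℝ} (hx : x ∈ Icc (0:ℝ) 1) :
    IsPriceStrategy (Measure.dirac x) :=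
  ⟨inferInstance, Measure.dirac_apply_of_mem hx⟩

/-- `q x y` is a firm's sale probability at own price `x` against the rival price `y`; it need not
be measurable, but agrees on `[0,1]²` with the measurable `w`. -/
theorem integral_pos_of_profitable_deviation {φ φ' : Measure ℝ} [IsProbabilityMeasure φ]
    [IsProbabilityMeasure φ'] (hφ : ∀ᵐ x ∂φ, x ∈ Icc (0:ℝ) 1) (hφ' : ∀ᵐ y ∂φ', y ∈ Icc (0:ℝ) 1)
    {q w : ℝ → ℝ → ℝ} (hw : Measurable fun τ : ℝ × ℝ => w τ.1 τ.2)
    (hw_nonneg : ∀ x y, 0 ≤ w x y) (hw_le_one : ∀ x y, w x y ≤ 1)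
    (hqw : ∀ x ∈ Icc (0:ℝ) 1, ∀ y ∈ Icc (0:ℝ) 1, q x y = w x y)
    {x₀ c : ℝ} (hx₀ : x₀ ∈ Ioc (0:ℝ) 1) (hc : 0 < c) (hcw : ∀ y ∈ Icc (0:ℝ) 1, c ≤ w x₀ y)
    (hopt : ∫ τ, q τ.1 τ.2 * τ.1 ∂(Measure.dirac x₀).prod φ' ≤ ∫ τ, q τ.1 τ.2 * τ.1 ∂φ.prod φ') :
    0 < ∫ τ, q τ.1 τ.2 ∂φ.prod φ' := by
  have hqw_ae : (fun τ : ℝ × ℝ => q τ.1 τ.2) =ᵐ[φ.prod φ'] fun τ => w τ.1 τ.2 := by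
    filter_upwards [Measure.quasiMeasurePreserving_fst.ae hφ,
      Measure.quasiMeasurePreserving_snd.ae hφ'] with τ h1 h2 using hqw _ h1 _ h2
  have hw_int : Integrable (fun τ : ℝ × ℝ => w τ.1 τ.2) (φ.prod φ') :=
    Integrable.of_bound hw.aestronglyMeasurable 1 (ae_of_all _ fun τ => by
      rw [Real.norm_of_nonneg (hw_nonneg _ _)]; exact hw_le_one _ _)
  have hdev : c * x₀ ≤ ∫ τ, q τ.1 τ.2 * τ.1 ∂(Measure.dirac x₀).prod φ' := by
    rw [Measure.dirac_prod, (measurableEmbedding_prodMk_left x₀).integral_map, integral_mul_const]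
    refine mul_le_mul_of_nonneg_right ?_ hx₀.1.le
    have hint : Integrable (fun y => w x₀ y) φ' :=
      Integrable.of_bound (hw.comp measurable_prodMk_left).aestronglyMeasurable 1
        (ae_of_all _ fun y => by rw [Real.norm_of_nonneg (hw_nonneg _ _)]; exact hw_le_one _ _)
    calc c = ∫ _, c ∂φ' := by simp
      _ ≤ ∫ y, w x₀ y ∂φ' := integral_mono_ae (integrable_const c) hint (hφ'.mono hcw)
      _ = ∫ y, q x₀ y ∂φ' := integral_congr_ae
          (hφ'.mono fun y hy => (hqw x₀ (Ioc_subset_Icc_self hx₀) y hy).symm)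
  by_contra! hzero
  rw [integral_congr_ae hqw_ae] at hzero
  have hw_zero : (fun τ : ℝ × ℝ => w τ.1 τ.2) =ᵐ[φ.prod φ'] 0 :=
    (integral_eq_zero_iff_of_nonneg (fun τ => hw_nonneg _ _) hw_int).1
      (le_antisymm hzero (integral_nonneg fun τ => hw_nonneg _ _))
  have hprofit : ∫ τ, q τ.1 τ.2 * τ.1 ∂φ.prod φ' = 0 := by
    refine integral_eq_zero_of_ae ?_
    filter_upwards [hqw_ae, hw_zero] with τ h1 h2
    simp [h1, h2]
  nlinarith [mul_pos hc hx₀.1]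

namespace SignalStructure

variable {S : Type} [MeasurableSpace S] (𝒮 : SignalStructure S)

theorem p_mem_Icc (s : S) : 𝒮.p s ∈ Icc (0:ℝ) 1 :=
  ⟨by unfold p; positivity,
    div_le_one_of_le₀ (le_add_of_nonneg_right ENNReal.toReal_nonneg) (by positivity)⟩

theorem measurable_p : Measurable 𝒮.p :=
  ((Measure.measurable_rnDeriv _ _).ennreal_toReal).div
    (((Measure.measurable_rnDeriv _ _).ennreal_toReal).add
      ((Measure.measurable_rnDeriv _ _).ennreal_toReal))

instance isProbabilityMeasure_ref : IsProbabilityMeasure 𝒮.ref := by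
  have := 𝒮.prob0; have := 𝒮.prob1
  constructor
  simp only [ref, Measure.smul_apply, Measure.add_apply, measure_univ, smul_eq_mul]
  rw [one_add_one_eq_two, ENNReal.inv_mul_cancel (by norm_num) (by norm_num)]

theorem F0_ac_ref : 𝒮.F0 ≪ 𝒮.ref :=
  (Measure.AbsolutelyContinuous.rfl.add_right _).smul_right (by simp)

theorem F1_ac_ref : 𝒮.F1 ≪ 𝒮.ref :=
  (𝒮.ac10.add_right _).smul_right (by simp)

theorem ae_zero_lt_p : ∀ᵐ s ∂𝒮.F0, 0 < 𝒮.p s := by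
  have := 𝒮.prob0
  filter_upwards [Measure.rnDeriv_pos 𝒮.F0_ac_ref, 𝒮.F0_ac_ref.ae_le (Measure.rnDeriv_lt_top 𝒮.F0 𝒮.ref)]
    with s hpos hfin
  have ha : 0 < (𝒮.f0 s).toReal := ENNReal.toReal_pos hpos.ne' hfin.ne
  exact div_pos ha (lt_add_of_lt_of_nonneg ha ENNReal.toReal_nonneg)

theorem ae_p_lt_one : ∀ᵐ s ∂𝒮.F1, 𝒮.p s < 1 := by
  have := 𝒮.prob1
  filter_upwards [Measure.rnDeriv_pos 𝒮.F1_ac_ref, 𝒮.F1_ac_ref.ae_le (Measure.rnDeriv_lt_top 𝒮.F1 𝒮.ref)]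
    with s hpos hfin
  have hb : 0 < (𝒮.f1 s).toReal := ENNReal.toReal_pos hpos.ne' hfin.ne
  rw [p, div_lt_one (lt_add_of_nonneg_of_lt ENNReal.toReal_nonneg hb)]
  linarith

theorem measure_p_eq_zero_of_continuousAt (F : Measure S) [IsFiniteMeasure F] {x : ℝ}
    (hc : ContinuousAt (fun y => (F {s | 𝒮.p s < y}).toReal) x) : F {s | 𝒮.p s = x} = 0 := by
  have hjump : ∀ y ∈ Ioi x, F.real {s | 𝒮.p s < x} + F.real {s | 𝒮.p s = x}
      ≤ F.real {s | 𝒮.p s < y} := fun y (hxy : x < y) => by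
    rw [← measureReal_union (fun _ h1 h2 s hs => (h1 hs).ne (h2 hs))
      (measurableSet_eq_fun 𝒮.measurable_p measurable_const)]
    exact measureReal_mono fun s hs => hs.elim (fun h => h.trans hxy) (fun h => h.trans_lt hxy)
  have hc' : ContinuousAt (fun y => F.real {s | 𝒮.p s < y}) x := hc
  have hle := ge_of_tendsto (hc'.tendsto.mono_left nhdsWithin_le_nhds)
    (eventually_nhdsWithin_of_forall hjump)
  exact (measureReal_eq_zero_iff).1 (le_antisymm (by linarith) measureReal_nonneg)

variable {𝒮}

theorem Fmix_apply (μ : ℝ) (A : Set S) :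
    𝒮.Fmix μ A = ENNReal.ofReal μ * 𝒮.F0 A + ENNReal.ofReal (1 - μ) * 𝒮.F1 A := by
  simp [Fmix]

theorem Fmix_eq_zero {μ : ℝ} {A : Set S} (h0 : 𝒮.F0 A = 0) (h1 : 𝒮.F1 A = 0) :
    𝒮.Fmix μ A = 0 := by
  simp [Fmix_apply, h0, h1]

theorem Fmix_ne_zero {μ : ℝ} (hμ : 0 < μ) {A : Set S} (h : 𝒮.F0 A ≠ 0) : 𝒮.Fmix μ A ≠ 0 := by
  simp [Fmix_apply, hμ, h]

theorem isProbabilityMeasure_Fmix {μ : ℝ} (hμ : μ ∈ Icc (0:ℝ) 1) :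
    IsProbabilityMeasure (𝒮.Fmix μ) := by
  have := 𝒮.prob0; have := 𝒮.prob1
  constructor
  rw [Fmix_apply, measure_univ, measure_univ, mul_one, mul_one,
    ← ENNReal.ofReal_add hμ.1 (by linarith [hμ.2])]
  norm_num

theorem Fmix_p_eq_zero {g0 g1 : ℝ → ℝ} (hA : 𝒮.Assumption1 g0 g1) (hub : 𝒮.Unbounded)
    (μ x : ℝ) : 𝒮.Fmix μ {s | 𝒮.p s = x} = 0 := by
  have := 𝒮.prob0; have := 𝒮.prob1
  by_cases hx : x ∈ Ioo (0:ℝ) 1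
  · rw [← hub.1, ← hub.2] at hx
    exact Fmix_eq_zero (𝒮.measure_p_eq_zero_of_continuousAt _ (hA.hasDeriv0 x hx).continuousAt)
      (𝒮.measure_p_eq_zero_of_continuousAt _ (hA.hasDeriv1 x hx).continuousAt)
  obtain rfl | rfl | hempty : x = 0 ∨ x = 1 ∨ {s | 𝒮.p s = x} = ∅ := by
    by_contra! h
    obtain ⟨s, hs : 𝒮.p s = x⟩ := h.2.2
    subst hs
    exact hx ⟨lt_of_le_of_ne (𝒮.p_mem_Icc s).1 (Ne.symm h.1),
      lt_of_le_of_ne (𝒮.p_mem_Icc s).2 h.2.1⟩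
  · have h0 : 𝒮.F0 {s | 𝒮.p s = 0} = 0 :=
      measure_eq_zero_iff_ae_notMem.2 (𝒮.ae_zero_lt_p.mono fun s hs => hs.ne')
    exact Fmix_eq_zero h0 (𝒮.ac10 h0)
  · have h1 : 𝒮.F1 {s | 𝒮.p s = 1} = 0 :=
      measure_eq_zero_iff_ae_notMem.2 (𝒮.ae_p_lt_one.mono fun s hs => hs.ne)
    exact Fmix_eq_zero (𝒮.ac01 h1) h1
  · rw [hempty, measure_empty]

theorem Fmix_posterior_eq_zero {g0 g1 : ℝ → ℝ} (hA : 𝒮.Assumption1 g0 g1) (hub : 𝒮.Unbounded)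
    {μ : ℝ} (hμ : μ ∈ Ioo (0:ℝ) 1) {t : ℝ} (ht : t ∈ Icc (0:ℝ) 1) :
    𝒮.Fmix μ {s | posterior μ (𝒮.p s) = t} = 0 :=
  measure_mono_null (fun s hs => eq_beliefThreshold_of_posterior_eq hμ (𝒮.p_mem_Icc s) ht hs)
    (Fmix_p_eq_zero hA hub μ _)

theorem F0_lt_p_ne_zero {x : ℝ} (hx : x < 𝒮.alphaHi) : 𝒮.F0 {s | x < 𝒮.p s} ≠ 0 := by
  have := 𝒮.prob0
  have hne : {y | 𝒮.G0 y < 1}.Nonempty := ⟨-1, by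
    have : {s | 𝒮.p s < -1} = ∅ := eq_empty_of_forall_notMem fun s hs =>
      absurd (𝒮.p_mem_Icc s).1 (by linarith [show 𝒮.p s < -1 from hs])
    simp [G0, this]⟩
  obtain ⟨y, hy, hxy⟩ := exists_lt_of_lt_csSup hne hx
  intro h0
  have hfull : 𝒮.F0 {s | 𝒮.p s < y} = 1 :=
    (prob_compl_eq_zero_iff (𝒮.measurable_p measurableSet_Iio)).1
      (measure_mono_null (fun s hs => hxy.trans_le (not_lt.1 hs)) h0)
  simp [G0, hfull] at hy

theorem F0_p_lt_ne_zero {x : ℝ} (hx : 𝒮.alphaLo < x) : 𝒮.F0 {s | 𝒮.p s < x} ≠ 0 := by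
  have := 𝒮.prob0
  have hne : {y | 0 < 𝒮.G0 y}.Nonempty := ⟨2, by
    have : {s | 𝒮.p s < 2} = univ := eq_univ_of_forall fun s => by
      show 𝒮.p s < 2; linarith [(𝒮.p_mem_Icc s).2]
    simp [G0, this]⟩
  obtain ⟨y, hy, hyx⟩ := exists_lt_of_csInf_lt hne hx
  intro h0
  have : 𝒮.F0 {s | 𝒮.p s < y} = 0 := measure_mono_null (fun s hs => lt_trans hs hyx) h0
  simp [G0, this] at hy

variable (𝒮)

def shareAbove (μ r : ℝ) : ℝ := (𝒮.Fmix μ {s | r < posterior μ (𝒮.p s)}).toReal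

def shareBelow (μ r : ℝ) : ℝ := (𝒮.Fmix μ {s | posterior μ (𝒮.p s) < r}).toReal

variable {𝒮} {μ : ℝ}

theorem shareAbove_antitone (hμ : μ ∈ Icc (0:ℝ) 1) : Antitone (𝒮.shareAbove μ) := by
  have := isProbabilityMeasure_Fmix (𝒮 := 𝒮) hμ
  exact fun a b hab => ENNReal.toReal_mono (measure_ne_top _ _)
    (measure_mono fun s hs => lt_of_le_of_lt hab hs)

theorem shareBelow_monotone (hμ : μ ∈ Icc (0:ℝ) 1) : Monotone (𝒮.shareBelow μ) := by
  have := isProbabilityMeasure_Fmix (𝒮 := 𝒮) hμ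
  exact fun a b hab => ENNReal.toReal_mono (measure_ne_top _ _)
    (measure_mono fun s hs => lt_of_lt_of_le hs hab)

theorem shareAbove_le_one (hμ : μ ∈ Icc (0:ℝ) 1) (r : ℝ) : 𝒮.shareAbove μ r ≤ 1 := by
  have := isProbabilityMeasure_Fmix (𝒮 := 𝒮) hμ
  exact ENNReal.toReal_le_of_le_ofReal zero_le_one (by simpa using prob_le_one)

theorem shareBelow_le_one (hμ : μ ∈ Icc (0:ℝ) 1) (r : ℝ) : 𝒮.shareBelow μ r ≤ 1 := by
  have := isProbabilityMeasure_Fmix (𝒮 := 𝒮) hμ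
  exact ENNReal.toReal_le_of_le_ofReal zero_le_one (by simpa using prob_le_one)

theorem shareAbove_pos (hhi : 𝒮.alphaHi = 1) (hμ : μ ∈ Ioo (0:ℝ) 1) {t : ℝ}
    (ht : t ∈ Ioo (0:ℝ) 1) : 0 < 𝒮.shareAbove μ t := by
  have := isProbabilityMeasure_Fmix (𝒮 := 𝒮) (Ioo_subset_Icc_self hμ)
  have hX := (beliefThreshold_mem_Ioo hμ ht).2
  rw [← hhi] at hX
  refine ENNReal.toReal_pos (Fmix_ne_zero hμ.1 fun h0 => F0_lt_p_ne_zero hX ?_) (measure_ne_top _ _)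
  exact measure_mono_null (fun s hs =>
    (lt_posterior_iff hμ (𝒮.p_mem_Icc s) (Ioo_subset_Icc_self ht)).2 hs) h0

theorem shareBelow_pos (hlo : 𝒮.alphaLo = 0) (hμ : μ ∈ Ioo (0:ℝ) 1) {t : ℝ}
    (ht : t ∈ Ioo (0:ℝ) 1) : 0 < 𝒮.shareBelow μ t := by
  have := isProbabilityMeasure_Fmix (𝒮 := 𝒮) (Ioo_subset_Icc_self hμ)
  have hX := (beliefThreshold_mem_Ioo hμ ht).1
  rw [← hlo] at hX
  refine ENNReal.toReal_pos (Fmix_ne_zero hμ.1 fun h0 => F0_p_lt_ne_zero hX ?_) (measure_ne_top _ _)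
  exact measure_mono_null (fun s hs =>
    (posterior_lt_iff hμ (𝒮.p_mem_Icc s) (Ioo_subset_Icc_self ht)).2 hs) h0

variable {σ : CStrategy S} {τ0 τ1 : ℝ}

theorem actProb_buy0_eq (hbr : ∀ᵐ s ∂𝒮.Fmix μ, ∀ a,
      cUtil (posterior μ (𝒮.p s)) τ0 τ1 a ≤ cUtil (posterior μ (𝒮.p s)) τ0 τ1 (σ τ0 τ1 s))
    (hnull : 𝒮.Fmix μ {s | posterior μ (𝒮.p s) = buy0Threshold τ0 τ1} = 0) :
    𝒮.actProb μ σ τ0 τ1 .buy0 = 𝒮.shareAbove μ (buy0Threshold τ0 τ1) := by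
  refine congrArg ENNReal.toReal (measure_congr (eventuallyEq_set.2 ?_))
  filter_upwards [hbr, measure_eq_zero_iff_ae_notMem.1 hnull] with s hs hne
  exact eq_buy0_iff_of_isBestReply hs hne

theorem actProb_buy1_eq (hbr : ∀ᵐ s ∂𝒮.Fmix μ, ∀ a,
      cUtil (posterior μ (𝒮.p s)) τ0 τ1 a ≤ cUtil (posterior μ (𝒮.p s)) τ0 τ1 (σ τ0 τ1 s))
    (hnull : 𝒮.Fmix μ {s | posterior μ (𝒮.p s) = buy1Threshold τ0 τ1} = 0) :
    𝒮.actProb μ σ τ0 τ1 .buy1 = 𝒮.shareBelow μ (buy1Threshold τ0 τ1) := by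
  refine congrArg ENNReal.toReal (measure_congr (eventuallyEq_set.2 ?_))
  filter_upwards [hbr, measure_eq_zero_iff_ae_notMem.1 hnull] with s hs hne
  exact eq_buy1_iff_of_isBestReply hs hne

variable {φ0 φ1 : Measure ℝ}

theorem Pi1_eq_integral_swap [SFinite φ0] [SFinite φ1] :
    𝒮.Pi1 μ φ0 φ1 σ = ∫ τ, 𝒮.actProb μ σ τ.2 τ.1 .buy1 * τ.1 ∂φ1.prod φ0 :=
  integral_prod_swap (fun τ : ℝ × ℝ => 𝒮.actProb μ σ τ.2 τ.1 .buy1 * τ.1)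

theorem IsSPE.actProbMix_buy0_pos (hSPE : 𝒮.IsSPE μ φ0 φ1 σ) (hμ : μ ∈ Ioo (0:ℝ) 1)
    (hnull : ∀ t ∈ Icc (0:ℝ) 1, 𝒮.Fmix μ {s | posterior μ (𝒮.p s) = t} = 0)
    (hhi : 𝒮.alphaHi = 1) : 0 < 𝒮.actProbMix μ φ0 φ1 σ .buy0 := by
  have := hSPE.strat0.1
  have := hSPE.strat1.1
  have hμ' := Ioo_subset_Icc_self hμ
  refine integral_pos_of_profitable_deviation hSPE.strat0.ae_mem_Icc hSPE.strat1.ae_mem_Icc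
    (w := fun x y => 𝒮.shareAbove μ (buy0Threshold x y))
    ((shareAbove_antitone hμ').measurable.comp (by unfold buy0Threshold; fun_prop))
    (fun _ _ => ENNReal.toReal_nonneg) (fun _ _ => shareAbove_le_one hμ' _)
    (fun x hx y hy => actProb_buy0_eq (hSPE.consumerBR x hx y hy)
      (hnull _ (buy0Threshold_mem_Icc hx hy)))
    (x₀ := 1 / 2) (by norm_num) (shareAbove_pos hhi hμ (t := 3 / 4) (by norm_num))
    (fun y hy => shareAbove_antitone hμ' (max_le (by norm_num) (by linarith [hy.1])))
    (hSPE.firm0opt _ (isPriceStrategy_dirac (by norm_num)))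

theorem IsSPE.actProbMix_buy1_pos (hSPE : 𝒮.IsSPE μ φ0 φ1 σ) (hμ : μ ∈ Ioo (0:ℝ) 1)
    (hnull : ∀ t ∈ Icc (0:ℝ) 1, 𝒮.Fmix μ {s | posterior μ (𝒮.p s) = t} = 0)
    (hlo : 𝒮.alphaLo = 0) : 0 < 𝒮.actProbMix μ φ0 φ1 σ .buy1 := by
  have := hSPE.strat0.1
  have := hSPE.strat1.1
  have hμ' := Ioo_subset_Icc_self hμ
  have hopt := hSPE.firm1opt _ (isPriceStrategy_dirac (x := 1 / 2) (by norm_num))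
  rw [Pi1_eq_integral_swap, Pi1_eq_integral_swap] at hopt
  rw [actProbMix, ← integral_prod_swap]
  refine integral_pos_of_profitable_deviation hSPE.strat1.ae_mem_Icc hSPE.strat0.ae_mem_Icc
    (q := fun y x => 𝒮.actProb μ σ x y .buy1) (w := fun y x => 𝒮.shareBelow μ (buy1Threshold x y))
    ((shareBelow_monotone hμ').measurable.comp (by unfold buy1Threshold; fun_prop))
    (fun _ _ => ENNReal.toReal_nonneg) (fun _ _ => shareBelow_le_one hμ' _)
    (fun y hy x hx => actProb_buy1_eq (hSPE.consumerBR x hx y hy)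
      (hnull _ (buy1Threshold_mem_Icc hx hy)))
    (by norm_num) (shareBelow_pos hlo hμ (t := 1 / 4) (by norm_num))
    (fun x hx => shareBelow_monotone hμ' (le_min (by norm_num) (by linarith [hx.1]))) hopt

end SignalStructure

/-- With unbounded signals, for every prior μ ∈ (0,1) there is no
deterrence equilibrium: in every SPE of Γ(μ), each firm is chosen by the consumer
with positive probability. -/
theorem stmt0 {S : Type} [MeasurableSpace S] (𝒮 : SignalStructure S)
    (g0 g1 : ℝ → ℝ) (hA : 𝒮.Assumption1 g0 g1)
    (hub : 𝒮.Unbounded)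
    (μ : ℝ) (hμ : μ ∈ Ioo (0:ℝ) 1)
    (φ0 φ1 : Measure ℝ) (σ : CStrategy S)
    (hSPE : 𝒮.IsSPE μ φ0 φ1 σ) :
    0 < 𝒮.actProbMix μ φ0 φ1 σ CAction.buy0 ∧
      0 < 𝒮.actProbMix μ φ0 φ1 σ CAction.buy1 := by
  have hnull : ∀ t ∈ Icc (0:ℝ) 1, 𝒮.Fmix μ {s | posterior μ (𝒮.p s) = t} = 0 :=
    fun _ ht => SignalStructure.Fmix_posterior_eq_zero hA hub hμ ht
  exact ⟨hSPE.actProbMix_buy0_pos hμ hnull hub.2, hSPE.actProbMix_buy1_pos hμ hnull hub.1⟩
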